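/- arXiv:2407.09213 — 4 statements merged into one kernel-verified Lean document; each statement's English description precedes it below -/
import Mathlib

section
/- Suppose p : ℝ^n → ℝ is a complete isometric hyperbolic polynomial of degree d along e, with hyperbolicity cone Λ = Λ(p,e). Then λ(Λ) = ℝ^d_+ ∩ ℝ^d_↓ holds if and only if λ(ℝ^n) = ℝ^d_↓. -/
/-!
Adding `s • e` shifts every root of `t ↦ p(x - t e)` by `s`, so `λ(x + s e) = λ(x) + s`:
the image `λ(ℝ^n)` is a set of decreasing vectors closed under adding constants. Any decreasing
vector becomes nonnegative after adding a large constant, so such a set is all of `ℝ^d_↓` as soon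
as it contains all of `ℝ^d_+ ∩ ℝ^d_↓`.
-/

open Polynomial in
lemma Fin.univ_val_map_eq_of_forall_prod_sub_eq {d : ℕ} {a b : Fin d → ℝ}
    (h : ∀ t, ∏ i, (a i - t) = ∏ i, (b i - t)) :
    Finset.univ.val.map a = Finset.univ.val.map b := by
  have hpoly : ∏ i, (X - C (a i)) = ∏ i, (X - C (b i)) := by
    refine Polynomial.funext fun t => ?_
    simp only [eval_prod, eval_sub, eval_X, eval_C, ← neg_sub (a _) t, ← neg_sub (b _) t,
      Finset.prod_neg, h t]
  rw [← roots_multiset_prod_X_sub_C (Finset.univ.val.map a),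
    ← roots_multiset_prod_X_sub_C (Finset.univ.val.map b), Multiset.map_map, Multiset.map_map]
  exact congrArg roots hpoly

lemma Antitone.eq_of_univ_val_map_eq {d : ℕ} {a b : Fin d → ℝ} (ha : Antitone a)
    (hb : Antitone b) (h : Finset.univ.val.map a = Finset.univ.val.map b) : a = b := by
  rw [Fin.univ_val_map, Fin.univ_val_map, Multiset.coe_eq_coe] at h
  refine List.ofFn_injective (h.eq_of_pairwise' (r := (· ≥ ·)) ?_ ?_)
  · exact List.pairwise_ofFn.mpr fun i j hij => ha hij.le
  · exact List.pairwise_ofFn.mpr fun i j hij => hb hij.le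

lemma Antitone.eq_of_forall_prod_sub_eq {d : ℕ} {a b : Fin d → ℝ} (ha : Antitone a)
    (hb : Antitone b) (h : ∀ t, ∏ i, (a i - t) = ∏ i, (b i - t)) : a = b :=
  ha.eq_of_univ_val_map_eq hb (Fin.univ_val_map_eq_of_forall_prod_sub_eq h)

lemma inter_nonneg_eq_iff_eq_antitone {d : ℕ} {S : Set (Fin d → ℝ)}
    (hS : S ⊆ {u | Antitone u}) (hshift : ∀ u ∈ S, ∀ s : ℝ, (u + fun _ => s) ∈ S) :
    S ∩ {u | ∀ i, 0 ≤ u i} = {u | (∀ i, 0 ≤ u i) ∧ Antitone u} ↔ S = {u | Antitone u} := by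
  constructor
  · intro h
    refine hS.antisymm fun u hu => ?_
    obtain ⟨s, hs⟩ := Finite.exists_le fun i => -u i
    have hus : (u + fun _ => s) ∈ S := by
      refine (h.ge ⟨fun i => ?_, fun i j hij => ?_⟩).1
      · simpa [neg_le_iff_add_nonneg'] using hs i
      · simpa using hu hij
    convert hshift _ hus (-s) using 1
    ext
    simp
  · rintro rfl
    ext u
    simp [and_comm]

lemma eigenvalues_add_smul {n d : ℕ} {P : MvPolynomial (Fin n) ℝ} {e : Fin n → ℝ}
    {lm : (Fin n → ℝ) → Fin d → ℝ} (hpe : MvPolynomial.eval e P ≠ 0)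
    (hroots : ∀ (x : Fin n → ℝ) (t : ℝ),
      MvPolynomial.eval (x - t • e) P = MvPolynomial.eval e P * ∏ i, (lm x i - t))
    (hord : ∀ x, Antitone (lm x)) (x : Fin n → ℝ) (s : ℝ) :
    lm (x + s • e) = lm x + fun _ => s := by
  refine (hord _).eq_of_forall_prod_sub_eq (fun i j hij => by simpa using hord x hij) fun t => ?_
  have hx : x + s • e - t • e = x - (t - s) • e := by
    rw [sub_smul]; abel
  have := hroots (x + s • e) t
  rw [hx, hroots x (t - s)] at this
  simp only [mul_left_cancel₀ hpe this.symm, Pi.add_apply]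
  exact Finset.prod_congr rfl fun i _ => by ring

theorem stmt_4_general {n d : ℕ}
    (P : MvPolynomial (Fin n) ℝ) (e : Fin n → ℝ)
    (lm : (Fin n → ℝ) → Fin d → ℝ)
    (hpe : MvPolynomial.eval e P ≠ 0)
    (hroots : ∀ (x : Fin n → ℝ) (t : ℝ),
      MvPolynomial.eval (x - t • e) P = MvPolynomial.eval e P * ∏ i, (lm x i - t))
    (hord : ∀ x, Antitone (lm x)) :
    lm '' {y : Fin n → ℝ | ∀ i, 0 ≤ lm y i}
        = {u : Fin d → ℝ | (∀ i, 0 ≤ u i) ∧ Antitone u}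
      ↔ Set.range lm = {u : Fin d → ℝ | Antitone u} := by
  rw [show {y | ∀ i, 0 ≤ lm y i} = lm ⁻¹' {u | ∀ i, 0 ≤ u i} from rfl,
    Set.image_preimage_eq_range_inter]
  refine inter_nonneg_eq_iff_eq_antitone (Set.range_subset_iff.mpr hord) ?_
  rintro _ ⟨x, rfl⟩ s
  exact ⟨x + s • e, eigenvalues_add_smul hpe hroots hord x s⟩

/-- For a complete isometric hyperbolic polynomial `p` of degree `d`
along `e` with hyperbolicity cone `Λ`: `λ(Λ) = ℝ^d₊ ∩ ℝ^d↓` if and only if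
`λ(ℝ^n) = ℝ^d↓`. -/
theorem stmt_4 {n d : ℕ}
    (P : MvPolynomial (Fin n) ℝ) (e : Fin n → ℝ)
    (lm : (Fin n → ℝ) → Fin d → ℝ)
    (hhom : P.IsHomogeneous d)
    (hpe : MvPolynomial.eval e P ≠ 0)
    (hroots : ∀ (x : Fin n → ℝ) (t : ℝ),
      MvPolynomial.eval (x - t • e) P = MvPolynomial.eval e P * ∏ i, (lm x i - t))
    (hord : ∀ x, Antitone (lm x))
    (hcomplete : ∀ x, lm x = 0 → x = 0)
    (hiso : ∀ y z : Fin n → ℝ, ∃ x, lm x = lm z ∧ lm (x + y) = lm x + lm y) :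
    lm '' {y : Fin n → ℝ | ∀ i, 0 ≤ lm y i}
        = {u : Fin d → ℝ | (∀ i, 0 ≤ u i) ∧ Antitone u}
      ↔ Set.range lm = {u : Fin d → ℝ | Antitone u} :=
  stmt_4_general P e lm hpe hroots hord
end

section
/- Let p : ℝ^3 → ℝ be the polynomial p(x) = (x_1+x_2+x_3)(x_1−x_2+x_3)(2x_1−x_2−x_3)(x_1+2x_2−x_3). Then: (a) p is hyperbolic along e = (0,0,1); (b) its hyperbolicity cone satisfies Λ(p,e) = {x ∈ ℝ^3 : x_1+x_2+x_3 ≥ 0, x_1−x_2+x_3 ≥ 0, −2x_1+x_2+x_3 ≥ 0, −x_1−2x_2+x_3 ≥ 0}; (c) p is a minimal degree polynomial for Λ(p,e), i.e., p divides every hyperbolic polynomial q along e with Λ(q,e) = Λ(p,e); and (d) p is not isometric — in fact, for z = (3,1,0) and y = (−1,0,0) there is no w ∈ ℝ^3 with λ(w) = λ(z) and λ(w+y) = λ(w) + λ(y). -/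
/-!
The four linear forms `ℓᵢ` whose product is `p` all take the value `1` at `e`, so
`p (x - t e) = ∏ (ℓᵢ x - t)`: the eigenvalues of `x` are the values `ℓᵢ x`, which gives (a) and (b).

For (c), let `q` be hyperbolic along `e` with the same cone. At a boundary point `x` of the cone
with `q x ≠ 0` all eigenvalues of `x` for `q` would be positive, so `x - ε e` would still lie in
the cone for small `ε > 0`, which is false. Hence `q` vanishes on the boundary, in particular on a
two-dimensional box inside each facet `ℓᵢ = 0`, so every `ℓᵢ` divides `q`; the `ℓᵢ` are pairwise
non-associated primes, so their product `p` divides `q`.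

For (d), `λ z = (4, 2, -5, -5)` and `λ y = (2, 1, -1, -1)`. The values `ℓᵢ w` would have to lie
in `{4, 2, -5}` and the values `ℓᵢ (w + y) = ℓᵢ w + ℓᵢ y` in `{6, 3, -6}`. This forces
`ℓ₂ w = 4`, `ℓ₃ w = 2` and `ℓ₀ w, ℓ₁ w ∈ {4, -5}`, and no such choice satisfies the linear
relation `7 ℓ₀ - 9 ℓ₁ - 4 ℓ₂ + 6 ℓ₃ = 0` among the four forms on `ℝ³`.
-/

open MvPolynomial

/-- The polynomial `p(x) = (x₁+x₂+x₃)(x₁-x₂+x₃)(2x₁-x₂-x₃)(x₁+2x₂-x₃)` on `ℝ³`. -/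
noncomputable def P8 : MvPolynomial (Fin 3) ℝ :=
  (X 0 + X 1 + X 2) * (X 0 - X 1 + X 2) * (2 * X 0 - X 1 - X 2) * (X 0 + 2 * X 1 - X 2)

noncomputable def p8 (x : Fin 3 → ℝ) : ℝ := MvPolynomial.eval x P8

def e8 : Fin 3 → ℝ := ![0, 0, 1]

/-- `r` is the (decreasingly ordered) vector of eigenvalues of `x`, i.e. of the roots of
`t ↦ p8(x - t e8)`, counted with multiplicity. -/
def IsEig8 (x : Fin 3 → ℝ) (r : Fin 4 → ℝ) : Prop :=
  Antitone r ∧ ∀ t : ℝ, p8 (x - t • e8) = p8 e8 * ∏ i, (r i - t)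

/-- The hyperbolicity cone `Λ(p8, e8)`: all eigenvalues nonnegative. -/
def Lambda8 : Set (Fin 3 → ℝ) :=
  {x | ∃ r : Fin 4 → ℝ, IsEig8 x r ∧ ∀ i, 0 ≤ r i}

section

variable {R ι : Type*} [CommRing R] [IsDomain R] [Fintype ι]

theorem exists_eq_of_prod_sub_eq {r s : ι → R} (h : ∀ t, ∏ i, (r i - t) = ∏ i, (s i - t))
    (i : ι) : ∃ j, s j = r i := by
  have hzero : ∏ j, (s j - r i) = 0 := by
    rw [← h]; exact Finset.prod_eq_zero (Finset.mem_univ i) (sub_self _)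
  obtain ⟨j, -, hj⟩ := Finset.prod_eq_zero_iff.1 hzero
  exact ⟨j, sub_eq_zero.1 hj⟩

theorem map_univ_eq_of_prod_sub_eq [Infinite R] {r s : ι → R}
    (h : ∀ t, ∏ i, (r i - t) = ∏ i, (s i - t)) :
    Finset.univ.val.map r = Finset.univ.val.map s := by
  have hpoly : ∏ i, (Polynomial.X - Polynomial.C (r i)) =
      ∏ i, (Polynomial.X - Polynomial.C (s i)) := Polynomial.funext fun t => by
    simp only [Polynomial.eval_prod, Polynomial.eval_sub, Polynomial.eval_X, Polynomial.eval_C,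
      ← neg_sub (r _) t, ← neg_sub (s _) t, Finset.prod_neg, h t]
  rw [← Polynomial.roots_multiset_prod_X_sub_C (Finset.univ.val.map r),
    ← Polynomial.roots_multiset_prod_X_sub_C (Finset.univ.val.map s)]
  simpa only [Multiset.map_map, Function.comp_def, Finset.prod_eq_multiset_prod] using
    congrArg Polynomial.roots hpoly

theorem eq_of_antitone_of_prod_sub_eq [PartialOrder R] [Infinite R] {n : ℕ} {r s : Fin n → R}
    (hr : Antitone r) (hs : Antitone s) (h : ∀ t, ∏ i, (r i - t) = ∏ i, (s i - t)) : r = s := by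
  have hperm := map_univ_eq_of_prod_sub_eq h
  rw [Fin.univ_val_map, Fin.univ_val_map, Multiset.coe_eq_coe] at hperm
  exact List.ofFn_injective (hperm.eq_of_sortedGE hr.sortedGE_ofFn hs.sortedGE_ofFn)

end

theorem exists_antitone_comp_perm {α : Type*} [LinearOrder α] {n : ℕ} (f : Fin n → α) :
    ∃ σ : Equiv.Perm (Fin n), Antitone (f ∘ σ) :=
  ⟨Fin.revPerm.trans (Tuple.sort f), fun _ _ hij => Tuple.monotone_sort f (Fin.rev_le_rev.2 hij)⟩

def facetForm (x : Fin 3 → ℝ) : Fin 4 → ℝ :=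
  ![x 0 + x 1 + x 2, x 0 - x 1 + x 2, -2 * x 0 + x 1 + x 2, -x 0 - 2 * x 1 + x 2]

theorem facetForm_sub_smul_e8 (x : Fin 3 → ℝ) (t : ℝ) (i : Fin 4) :
    facetForm (x - t • e8) i = facetForm x i - t := by
  fin_cases i <;> simp [facetForm, e8] <;> ring

theorem facetForm_add (x y : Fin 3 → ℝ) : facetForm (x + y) = facetForm x + facetForm y := by
  ext i; fin_cases i <;> simp [facetForm] <;> ring

theorem p8_eq_prod_facetForm (x : Fin 3 → ℝ) : p8 x = ∏ i, facetForm x i := by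
  simp [p8, P8, facetForm, Fin.prod_univ_four]; ring

theorem p8_e8 : p8 e8 = 1 := by
  simp [p8_eq_prod_facetForm, facetForm, e8, Fin.prod_univ_four]

theorem isEig8_iff {x : Fin 3 → ℝ} {r : Fin 4 → ℝ} :
    IsEig8 x r ↔ Antitone r ∧ ∀ t, ∏ i, (facetForm x i - t) = ∏ i, (r i - t) := by
  simp only [IsEig8, p8_e8, one_mul, p8_eq_prod_facetForm (_ - _ • _), facetForm_sub_smul_e8]

theorem exists_isEig8 (x : Fin 3 → ℝ) : ∃ r, IsEig8 x r := by
  obtain ⟨σ, hσ⟩ := exists_antitone_comp_perm (facetForm x)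
  exact ⟨_, isEig8_iff.2 ⟨hσ, fun t => (Equiv.prod_comp σ fun i => facetForm x i - t).symm⟩⟩

theorem mem_lambda8_iff {x : Fin 3 → ℝ} : x ∈ Lambda8 ↔ ∀ i, 0 ≤ facetForm x i := by
  obtain ⟨r, hr⟩ := exists_isEig8 x
  have hprod := (isEig8_iff.1 hr).2
  constructor
  · rintro ⟨r', hr', hnonneg⟩ i
    obtain ⟨j, hj⟩ := exists_eq_of_prod_sub_eq (isEig8_iff.1 hr').2 i
    exact hj ▸ hnonneg j
  · intro hnonneg
    refine ⟨r, hr, fun i => ?_⟩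
    obtain ⟨j, hj⟩ := exists_eq_of_prod_sub_eq (fun t => (hprod t).symm) i
    exact hj ▸ hnonneg j

theorem lambda8_eq : Lambda8 = {x : Fin 3 → ℝ |
    0 ≤ x 0 + x 1 + x 2 ∧ 0 ≤ x 0 - x 1 + x 2 ∧
    0 ≤ -2 * x 0 + x 1 + x 2 ∧ 0 ≤ -x 0 - 2 * x 1 + x 2} := by
  ext x
  simp [mem_lambda8_iff, Fin.forall_fin_succ, facetForm]

section

variable {R σ : Type*} [CommRing R] [DecidableEq σ]

theorem X_sub_dvd_sub_bind₁_update (i : σ) (c φ : MvPolynomial σ R) :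
    X i - c ∣ φ - bind₁ (Function.update X i c) φ := by
  rw [← Ideal.mem_span_singleton, ← Ideal.Quotient.eq]
  have hcomp : Ideal.Quotient.mkₐ R (Ideal.span {X i - c}) =
      (Ideal.Quotient.mkₐ R _).comp (bind₁ (Function.update X i c)) := by
    refine MvPolynomial.algHom_ext fun j => ?_
    by_cases hj : j = i
    · subst hj
      simp [Ideal.Quotient.mkₐ_eq_mk, Ideal.Quotient.eq]
    · simp [hj]
  exact congr($hcomp φ)

end

theorem eval_bind₁ {R σ τ : Type*} [CommSemiring R] (x : τ → R) (f : σ → MvPolynomial τ R)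
    (φ : MvPolynomial σ R) :
    eval x (bind₁ f φ) = eval (fun i => eval x (f i)) φ :=
  aeval_bind₁ x f φ

noncomputable def planeForm (α β : ℝ) : MvPolynomial (Fin 3) ℝ := X 2 - (C α * X 0 + C β * X 1)

theorem eval_planeForm (α β : ℝ) (x : Fin 3 → ℝ) :
    eval x (planeForm α β) = x 2 - (α * x 0 + β * x 1) := by
  simp [planeForm]

theorem prime_planeForm (α β : ℝ) : Prime (planeForm α β) := by
  set c : MvPolynomial (Fin 3) ℝ := C α * X 0 + C β * X 1
  let shear : MvPolynomial (Fin 3) ℝ ≃ₐ[ℝ] MvPolynomial (Fin 3) ℝ :=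
    AlgEquiv.ofAlgHom (aeval (Function.update X 2 (X 2 - c)))
      (aeval (Function.update X 2 (X 2 + c)))
      (algHom_ext fun i => by fin_cases i <;> simp [c])
      (algHom_ext fun i => by fin_cases i <;> simp [c])
  have hshear : shear (X 2) = planeForm α β := by simp [shear, planeForm, c]
  rw [← hshear]
  exact (MulEquiv.prime_iff shear.toMulEquiv).2 X_prime

theorem planeForm_dvd_of_eval_eq_zero {α β : ℝ} {Q : MvPolynomial (Fin 3) ℝ} {S T : Set ℝ}
    (hS : S.Infinite) (hT : T.Infinite)
    (h : ∀ s ∈ S, ∀ u ∈ T, eval ![s, u, α * s + β * u] Q = 0) : planeForm α β ∣ Q := by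
  have hsub : bind₁ (Function.update X 2 (C α * X 0 + C β * X 1)) Q = 0 := by
    refine funext_set ![S, T, Set.univ]
      (fun i => by fin_cases i <;> simp [hS, hT, Set.infinite_univ]) fun x hx => ?_
    have hpt : (fun i => eval x (Function.update X 2 (C α * X 0 + C β * X 1) i)) =
        ![x 0, x 1, α * x 0 + β * x 1] := by
      ext i; fin_cases i <;> simp
    rw [eval_bind₁, hpt, map_zero]
    exact h _ (by simpa using hx 0 trivial) _ (by simpa using hx 1 trivial)
  have hdvd := X_sub_dvd_sub_bind₁_update 2 (C α * X 0 + C β * X 1) Q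
  rwa [hsub, sub_zero] at hdvd

theorem eq_of_planeForm_dvd {α β α' β' : ℝ} (h : planeForm α β ∣ planeForm α' β') :
    (α, β) = (α', β') := by
  have hzero : ∀ x, eval x (planeForm α β) = 0 → eval x (planeForm α' β') = 0 := by
    obtain ⟨d, hd⟩ := h
    intro x hx
    rw [hd, map_mul, hx, zero_mul]
  have h₀ := hzero ![1, 0, α] (by simp [eval_planeForm])
  have h₁ := hzero ![0, 1, β] (by simp [eval_planeForm])
  simp [eval_planeForm] at h₀ h₁
  ext <;> linarith

def facetSlope : Fin 4 → ℝ × ℝ := ![(-1, -1), (-1, 1), (2, -1), (1, 2)]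

theorem facetSlope_injective : Function.Injective facetSlope := by
  intro i j h
  fin_cases i <;> fin_cases j <;> norm_num [facetSlope] at h <;> rfl

noncomputable def facetPoly (i : Fin 4) : MvPolynomial (Fin 3) ℝ :=
  planeForm (facetSlope i).1 (facetSlope i).2

theorem eval_facetPoly (x : Fin 3 → ℝ) (i : Fin 4) : eval x (facetPoly i) = facetForm x i := by
  fin_cases i <;> simp [facetPoly, facetSlope, facetForm, eval_planeForm] <;> ring

theorem P8_eq_prod_facetPoly : P8 = ∏ i, facetPoly i := by
  simp [P8, facetPoly, facetSlope, planeForm, Fin.prod_univ_four, map_ofNat]; ring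

theorem pairwise_isRelPrime_facetPoly : Pairwise (Function.onFun IsRelPrime facetPoly) :=
  fun _ _ hij => (prime_planeForm _ _).irreducible.isRelPrime_iff_not_dvd.2 fun h =>
    hij (facetSlope_injective (eq_of_planeForm_dvd h))

def hyperbolicityCone {σ : Type*} (Q : MvPolynomial σ ℝ) (e : σ → ℝ) (k : ℕ) : Set (σ → ℝ) :=
  {x | ∃ r : Fin k → ℝ, (∀ t : ℝ, eval (x - t • e) Q = eval e Q * ∏ i, (r i - t)) ∧ ∀ i, 0 ≤ r i}

theorem exists_pos_sub_smul_mem_hyperbolicityCone {σ : Type*} {Q : MvPolynomial σ ℝ}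
    {e x : σ → ℝ} {k : ℕ} (hx : x ∈ hyperbolicityCone Q e k) (hQx : eval x Q ≠ 0) :
    ∃ ε : ℝ, 0 < ε ∧ x - ε • e ∈ hyperbolicityCone Q e k := by
  obtain ⟨r, hr, hnonneg⟩ := hx
  have hpos : ∀ i, 0 < r i := fun i => (hnonneg i).lt_of_ne fun hi => hQx <| by
    simpa [← hi, Finset.prod_eq_zero (Finset.mem_univ i)] using hr 0
  obtain ⟨ε, hle, hε⟩ := ((Filter.eventually_all.2 fun i =>
    nhdsWithin_le_nhds (eventually_le_nhds (hpos i))).and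
      (self_mem_nhdsWithin (a := (0 : ℝ)) (s := Set.Ioi 0))).exists
  refine ⟨ε, hε, fun i => r i - ε, fun t => ?_, fun i => sub_nonneg.2 (hle i)⟩
  rw [sub_sub, ← add_smul, hr]
  simp only [sub_sub]

theorem eval_eq_zero_of_facetForm_eq_zero {k : ℕ} {Q : MvPolynomial (Fin 3) ℝ}
    (hΛ : hyperbolicityCone Q e8 k = Lambda8) {x : Fin 3 → ℝ} (hx : ∀ i, 0 ≤ facetForm x i)
    {j : Fin 4} (hj : facetForm x j = 0) : eval x Q = 0 := by
  by_contra hQx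
  obtain ⟨ε, hε, hmem⟩ :=
    exists_pos_sub_smul_mem_hyperbolicityCone (hΛ ▸ mem_lambda8_iff.2 hx) hQx
  rw [hΛ, mem_lambda8_iff] at hmem
  have := hmem j
  rw [facetForm_sub_smul_e8, hj] at this
  linarith

theorem exists_infinite_box_in_facet (j : Fin 4) :
    ∃ S T : Set ℝ, S.Infinite ∧ T.Infinite ∧ ∀ s ∈ S, ∀ u ∈ T,
      ∀ i, 0 ≤ facetForm ![s, u, (facetSlope j).1 * s + (facetSlope j).2 * u] i := by
  fin_cases j
  · refine ⟨Set.Iio 0, Set.Iio 0, Set.Iio_infinite _, Set.Iio_infinite _, fun s hs u hu i => ?_⟩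
    simp only [Set.mem_Iio] at hs hu
    fin_cases i <;> simp [facetForm, facetSlope] <;> linarith
  · refine ⟨Set.Iio (-1), Set.Ioo 0 1, Set.Iio_infinite _, Set.Ioo_infinite (by norm_num),
      fun s hs u hu i => ?_⟩
    simp only [Set.mem_Iio, Set.mem_Ioo] at hs hu
    fin_cases i <;> simp [facetForm, facetSlope] <;> linarith
  · refine ⟨Set.Ioi 1, Set.Ioo 0 (1 / 3), Set.Ioi_infinite _, Set.Ioo_infinite (by norm_num),
      fun s hs u hu i => ?_⟩
    simp only [Set.mem_Ioi, Set.mem_Ioo] at hs hu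
    fin_cases i <;> simp [facetForm, facetSlope] <;> linarith
  · refine ⟨Set.Ioo 0 1, Set.Ioi 1, Set.Ioo_infinite (by norm_num), Set.Ioi_infinite _,
      fun s hs u hu i => ?_⟩
    simp only [Set.mem_Ioi, Set.mem_Ioo] at hs hu
    fin_cases i <;> simp [facetForm, facetSlope] <;> linarith

theorem facetPoly_dvd {k : ℕ} {Q : MvPolynomial (Fin 3) ℝ}
    (hΛ : hyperbolicityCone Q e8 k = Lambda8) (j : Fin 4) : facetPoly j ∣ Q := by
  obtain ⟨S, T, hS, hT, hnonneg⟩ := exists_infinite_box_in_facet j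
  refine planeForm_dvd_of_eval_eq_zero hS hT fun s hs u hu =>
    eval_eq_zero_of_facetForm_eq_zero hΛ (hnonneg s hs u hu) (j := j) ?_
  rw [← eval_facetPoly]
  simp [facetPoly, eval_planeForm]

theorem P8_dvd_of_hyperbolicityCone_eq {k : ℕ} {Q : MvPolynomial (Fin 3) ℝ}
    (hΛ : hyperbolicityCone Q e8 k = Lambda8) : P8 ∣ Q := by
  rw [P8_eq_prod_facetPoly]
  exact Fintype.prod_dvd_of_isRelPrime pairwise_isRelPrime_facetPoly (facetPoly_dvd hΛ)

theorem eq_of_isEig8 {x : Fin 3 → ℝ} {r s : Fin 4 → ℝ} (hr : IsEig8 x r) (hs : Antitone s)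
    (hprod : ∀ t, ∏ i, (facetForm x i - t) = ∏ i, (s i - t)) : r = s :=
  eq_of_antitone_of_prod_sub_eq hr.1 hs fun t => ((isEig8_iff.1 hr).2 t).symm.trans (hprod t)

theorem exists_eq_facetForm_of_isEig8 {x : Fin 3 → ℝ} {r : Fin 4 → ℝ} (hr : IsEig8 x r)
    (i : Fin 4) : ∃ j, r j = facetForm x i :=
  exists_eq_of_prod_sub_eq (isEig8_iff.1 hr).2 i

theorem isEig8_three_one_zero {r : Fin 4 → ℝ} (hr : IsEig8 ![3, 1, 0] r) : r = ![4, 2, -5, -5] :=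
  eq_of_isEig8 hr (by norm_num [Fin.antitone_iff_succ_le, Fin.forall_fin_succ])
    fun t => by simp [facetForm]; norm_num

theorem isEig8_neg_one_zero_zero {r : Fin 4 → ℝ} (hr : IsEig8 ![-1, 0, 0] r) :
    r = ![2, 1, -1, -1] :=
  eq_of_isEig8 hr (by norm_num [Fin.antitone_iff_succ_le, Fin.forall_fin_succ])
    fun t => by simp [facetForm, Fin.prod_univ_four]; ring

theorem not_isometric_p8 :
    ¬ ∃ (w : Fin 3 → ℝ) (rw rz ry rwy : Fin 4 → ℝ),
        IsEig8 w rw ∧ IsEig8 ![3, 1, 0] rz ∧ IsEig8 ![-1, 0, 0] ry ∧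
        IsEig8 (w + ![(-1 : ℝ), 0, 0]) rwy ∧ rw = rz ∧ rwy = rw + ry := by
  rintro ⟨w, _, rz, ry, _, hw, hz, hy, hwy, rfl, rfl⟩
  rw [isEig8_three_one_zero hz] at hw hwy
  rw [isEig8_neg_one_zero_zero hy] at hwy
  have hfacet_y : facetForm ![-1, 0, 0] = ![-1, -1, 2, 1] := by
    ext i; fin_cases i <;> simp [facetForm]
  set a := facetForm w
  have ha : ∀ i, a i = 4 ∨ a i = 2 ∨ a i = -5 := fun i => by
    simpa [Fin.exists_fin_succ, eq_comm, or_assoc] using exists_eq_facetForm_of_isEig8 hw i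
  have hb : ∀ i, a i + ![-1, -1, 2, 1] i = 6 ∨ a i + ![-1, -1, 2, 1] i = 3 ∨
      a i + ![-1, -1, 2, 1] i = -6 := fun i => by
    have := exists_eq_facetForm_of_isEig8 hwy i
    rw [facetForm_add, hfacet_y] at this
    norm_num [Fin.exists_fin_succ, eq_comm, or_assoc] at this
    exact this
  have hrel : 7 * a 0 - 9 * a 1 - 4 * a 2 + 6 * a 3 = 0 := by
    simp [a, facetForm]; ring
  have h2 : a 2 = 4 := by
    rcases ha 2 with h | h | h <;> rcases hb 2 with h' | h' | h' <;> simp at h' <;> linarith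
  have h3 : a 3 = 2 := by
    rcases ha 3 with h | h | h <;> rcases hb 3 with h' | h' | h' <;> simp at h' <;> linarith
  have h0 : a 0 = 4 ∨ a 0 = -5 := by
    rcases ha 0 with h | h | h <;> rcases hb 0 with h' | h' | h' <;> simp at h' <;>
      first | exact .inl h | exact .inr h | linarith
  have h1 : a 1 = 4 ∨ a 1 = -5 := by
    rcases ha 1 with h | h | h <;> rcases hb 1 with h' | h' | h' <;> simp at h' <;>
      first | exact .inl h | exact .inr h | linarith
  rcases h0 with h0 | h0 <;> rcases h1 with h1 | h1 <;> linarith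

/-- (a) `p8` is hyperbolic along `e8 = (0,0,1)`; (b) its hyperbolicity
cone is the stated polyhedral cone; (c) `p8` is a minimal degree polynomial for
`Λ(p8,e8)`, i.e. it divides every hyperbolic polynomial along `e8` having the same
hyperbolicity cone; (d) `p8` is not isometric: for `z = (3,1,0)`, `y = (-1,0,0)` there
is no `w` with `λ(w) = λ(z)` and `λ(w+y) = λ(w) + λ(y)`. -/
theorem stmt_8 :
    (p8 e8 ≠ 0 ∧ ∀ x : Fin 3 → ℝ, ∃ r : Fin 4 → ℝ, IsEig8 x r) ∧
    (Lambda8 = {x : Fin 3 → ℝ |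
        0 ≤ x 0 + x 1 + x 2 ∧ 0 ≤ x 0 - x 1 + x 2 ∧
        0 ≤ -2 * x 0 + x 1 + x 2 ∧ 0 ≤ -x 0 - 2 * x 1 + x 2}) ∧
    (∀ (k : ℕ) (Q : MvPolynomial (Fin 3) ℝ), Q.IsHomogeneous k →
      MvPolynomial.eval e8 Q ≠ 0 →
      (∀ x : Fin 3 → ℝ, ∃ r : Fin k → ℝ, ∀ t : ℝ,
        MvPolynomial.eval (x - t • e8) Q = MvPolynomial.eval e8 Q * ∏ i, (r i - t)) →
      {x : Fin 3 → ℝ | ∃ r : Fin k → ℝ,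
        (∀ t : ℝ, MvPolynomial.eval (x - t • e8) Q
            = MvPolynomial.eval e8 Q * ∏ i, (r i - t)) ∧ ∀ i, 0 ≤ r i} = Lambda8 →
      P8 ∣ Q) ∧
    ¬ ∃ (w : Fin 3 → ℝ) (rw rz ry rwy : Fin 4 → ℝ),
        IsEig8 w rw ∧ IsEig8 ![3, 1, 0] rz ∧ IsEig8 ![-1, 0, 0] ry ∧
        IsEig8 (w + ![(-1 : ℝ), 0, 0]) rwy ∧ rw = rz ∧ rwy = rw + ry :=
  ⟨⟨p8_e8 ▸ one_ne_zero, exists_isEig8⟩, lambda8_eq,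
    fun _ _ _ _ _ hΛ => P8_dvd_of_hyperbolicityCone_eq hΛ, not_isometric_p8⟩
end

section
/- Let K ⊆ ℝ^m be a regular closed convex cone, e ∈ int K, c_D > 0 and w ∈ ℝ^m. Then: (a) the supremum sup{t ∈ ℝ : t ≤ 0 and w − t e ∈ K} is attained and equals t_opt := min(0, λ_min(w)); and (b) the conic linear program min{⟨w, s⟩ : s ∈ K*, ⟨e, s⟩ ≤ c_D} has an optimal solution and its optimal value equals c_D · min(0, λ_min(w)). -/
/-!
The set `{t | w - t • e ∈ K}` is nonempty because `e` is interior, closed, downward closed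
because `e ∈ K`, and bounded above unless `-e ∈ K`, in which case `K` is the whole space. So
`λ_min(w)` is attained, which gives (a). For (b), weak duality
`⟪w, s⟫ = ⟪w - t • e, s⟫ + t ⟪e, s⟫ ≥ c_D t` for feasible `s` and `t ≤ 0` in that set gives the
lower bound. It is attained by `s = 0` when `λ_min(w) ≥ 0`, and otherwise by the normal of a
hyperplane supporting `K` at the boundary point `w - λ_min(w) • e`, scaled so that
`⟪e, s⟫ = c_D`.
-/

open scoped RealInnerProductSpace

open Set Filter Topology

section NormedSpace

variable {E : Type*} [NormedAddCommGroup E] [NormedSpace ℝ E] {K : Set E}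

theorem exists_pos_add_smul_mem_of_mem_interior {x : E} (hx : x ∈ interior K) (v : E) :
    ∃ r : ℝ, 0 < r ∧ x + r • v ∈ K := by
  have hlim : Tendsto (fun r : ℝ => x + r • v) (𝓝[>] 0) (𝓝 x) := by
    have : Continuous fun r : ℝ => x + r • v := by fun_prop
    simpa using (this.tendsto 0).mono_left nhdsWithin_le_nhds
  obtain ⟨r, hrK, hr⟩ :=
    ((hlim.eventually (mem_interior_iff_mem_nhds.1 hx)).and self_mem_nhdsWithin).exists
  exact ⟨r, hr, hrK⟩

theorem add_mem_of_convex_of_smul_mem (hconv : Convex ℝ K)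
    (hcone : ∀ c : ℝ, 0 ≤ c → ∀ x ∈ K, c • x ∈ K) {x y : E} (hx : x ∈ K) (hy : y ∈ K) :
    x + y ∈ K := by
  have hmid : (2⁻¹ : ℝ) • x + (2⁻¹ : ℝ) • y ∈ K :=
    hconv hx hy (by norm_num) (by norm_num) (by norm_num)
  simpa [← smul_add, smul_smul] using hcone 2 zero_le_two _ hmid

theorem eq_univ_of_neg_mem (hconv : Convex ℝ K) (hcone : ∀ c : ℝ, 0 ≤ c → ∀ x ∈ K, c • x ∈ K)
    {e : E} (he : e ∈ interior K) (hneg : -e ∈ K) : K = univ := by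
  -- `0` is the midpoint of `-e ∈ K` and `e ∈ interior K`
  have h0 : (0 : E) ∈ interior K := by
    simpa [smul_sub, ← two_smul ℝ e, smul_smul] using
      hconv.add_smul_sub_mem_interior hneg he (t := 2⁻¹) ⟨by norm_num, by norm_num⟩
  refine eq_univ_of_forall fun x => ?_
  obtain ⟨r, hr, hrx⟩ := exists_pos_add_smul_mem_of_mem_interior h0 x
  simpa [smul_smul, inv_mul_cancel₀ hr.ne'] using hcone r⁻¹ (inv_nonneg.2 hr.le) _ hrx

variable {e w : E}

theorem sub_smul_mem_of_le (hconv : Convex ℝ K) (hcone : ∀ c : ℝ, 0 ≤ c → ∀ x ∈ K, c • x ∈ K)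
    (heK : e ∈ K) {s t : ℝ} (ht : w - t • e ∈ K) (hst : s ≤ t) : w - s • e ∈ K := by
  have := add_mem_of_convex_of_smul_mem hconv hcone ht (hcone (t - s) (sub_nonneg.2 hst) e heK)
  convert this using 1
  module

theorem nonempty_setOf_sub_smul_mem (hcone : ∀ c : ℝ, 0 ≤ c → ∀ x ∈ K, c • x ∈ K)
    (he : e ∈ interior K) (w : E) : {t : ℝ | w - t • e ∈ K}.Nonempty := by
  obtain ⟨r, hr, hrw⟩ := exists_pos_add_smul_mem_of_mem_interior he w
  refine ⟨-r⁻¹, ?_⟩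
  simpa [smul_add, smul_smul, inv_mul_cancel₀ hr.ne', add_comm] using
    hcone r⁻¹ (inv_nonneg.2 hr.le) _ hrw

theorem bddAbove_setOf_sub_smul_mem (hclosed : IsClosed K)
    (hcone : ∀ c : ℝ, 0 ≤ c → ∀ x ∈ K, c • x ∈ K) (hneg : -e ∉ K) (w : E) :
    BddAbove {t : ℝ | w - t • e ∈ K} := by
  by_contra hunb
  have hfreq : ∃ᶠ t : ℝ in atTop, w - t • e ∈ K := frequently_atTop'.2 fun a => by
    obtain ⟨b, hb, hab⟩ := not_bddAbove_iff.1 hunb a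
    exact ⟨b, hab, hb⟩
  -- `t⁻¹ • (w - t • e) = t⁻¹ • w - e` lies in `K` for arbitrarily large `t` and tends to `-e`.
  have hlim : Tendsto (fun t : ℝ => t⁻¹ • w - e) atTop (𝓝 (-e)) := by
    simpa only [zero_smul, zero_sub] using
      (tendsto_inv_atTop_zero (𝕜 := ℝ)).smul_const w |>.sub_const e
  refine hneg (hclosed.mem_of_frequently_of_tendsto ?_ hlim)
  refine (hfreq.and_eventually (eventually_gt_atTop 0)).mono fun t ⟨ht, htpos⟩ => ?_
  simpa [smul_sub, smul_smul, inv_mul_cancel₀ htpos.ne'] using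
    hcone t⁻¹ (inv_nonneg.2 htpos.le) _ ht

theorem isGreatest_sSup_setOf_sub_smul_mem (hclosed : IsClosed K)
    (hcone : ∀ c : ℝ, 0 ≤ c → ∀ x ∈ K, c • x ∈ K) (he : e ∈ interior K) (hneg : -e ∉ K)
    (w : E) : IsGreatest {t : ℝ | w - t • e ∈ K} (sSup {t : ℝ | w - t • e ∈ K}) := by
  have hbdd := bddAbove_setOf_sub_smul_mem hclosed hcone hneg w
  refine ⟨?_, fun t ht => le_csSup hbdd ht⟩
  exact (hclosed.preimage (by fun_prop)).csSup_mem (nonempty_setOf_sub_smul_mem hcone he w) hbdd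

theorem sub_smul_notMem_interior_of_isGreatest {l : ℝ}
    (hl : IsGreatest {t : ℝ | w - t • e ∈ K} l) : w - l • e ∉ interior K := by
  intro hint
  obtain ⟨r, hr, hmem⟩ := exists_pos_add_smul_mem_of_mem_interior hint (-e)
  have : l + r ≤ l := hl.2 <| show w - (l + r) • e ∈ K by convert hmem using 1; module
  linarith

theorem isGreatest_min_zero_of_isGreatest (hconv : Convex ℝ K)
    (hcone : ∀ c : ℝ, 0 ≤ c → ∀ x ∈ K, c • x ∈ K) (heK : e ∈ K) {l : ℝ}
    (hl : IsGreatest {t : ℝ | w - t • e ∈ K} l) :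
    IsGreatest {t : ℝ | t ≤ 0 ∧ w - t • e ∈ K} (min 0 l) :=
  ⟨⟨min_le_left _ _, sub_smul_mem_of_le hconv hcone heK hl.1 (min_le_right _ _)⟩,
    fun _ ⟨ht0, ht⟩ => le_min ht0 (hl.2 ht)⟩

end NormedSpace

section InnerProductSpace

variable {E : Type*} [NormedAddCommGroup E] [InnerProductSpace ℝ E] [CompleteSpace E]
  {K : Set E} {e w : E}

theorem mul_le_inner_of_mem_innerDual {s : E} {c t : ℝ} (hs : s ∈ ProperCone.innerDual K)
    (hes : ⟪e, s⟫ ≤ c) (ht : w - t • e ∈ K) (ht0 : t ≤ 0) : c * t ≤ ⟪w, s⟫ := by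
  have hsplit : ⟪w, s⟫ = ⟪w - t • e, s⟫ + t * ⟪e, s⟫ := by
    rw [inner_sub_left, real_inner_smul_left]; ring
  nlinarith [ProperCone.mem_innerDual.1 hs ht]

theorem exists_mem_innerDual_inner_eq_zero (hconv : Convex ℝ K)
    (hcone : ∀ c : ℝ, 0 ≤ c → ∀ x ∈ K, c • x ∈ K) (he : e ∈ interior K) {z : E} (hz : z ∈ K)
    (hzi : z ∉ interior K) : ∃ s ∈ ProperCone.innerDual K, ⟪z, s⟫ = 0 ∧ 0 < ⟪e, s⟫ := by
  obtain ⟨f, hf⟩ := geometric_hahn_banach_open_point hconv.interior isOpen_interior hzi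
  have hle : ∀ x ∈ K, f x ≤ f z := by
    have hKsub : K ⊆ closure (interior K) := by
      rw [hconv.closure_interior_eq_closure_of_nonempty_interior ⟨e, he⟩]
      exact subset_closure
    exact fun x hx => closure_minimal (fun y hy => (hf y hy).le)
      (isClosed_le f.continuous continuous_const) (hKsub hx)
  -- `f` is bounded above on the cone `K`, hence nonpositive on it
  have hnonpos : ∀ x ∈ K, f x ≤ 0 := by
    intro x hx
    by_contra! hpos
    have := hle _ (hcone ((f z + 1) / f x) (div_nonneg (by linarith [hle x hx]) hpos.le) x hx)
    rw [map_smul, smul_eq_mul, div_mul_cancel₀ _ hpos.ne'] at this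
    linarith
  have hfz : f z = 0 := le_antisymm (hnonpos z hz)
    (by simpa using hle 0 (by simpa using hcone 0 le_rfl z hz))
  have hinner : ∀ x, ⟪x, -(InnerProductSpace.toDual ℝ E).symm f⟫ = -f x := fun x => by
    rw [inner_neg_right, real_inner_comm, InnerProductSpace.toDual_symm_apply]
  refine ⟨-(InnerProductSpace.toDual ℝ E).symm f, fun x hx => ?_, ?_, ?_⟩
  · simpa [hinner] using hnonpos x hx
  · simp [hinner, hfz]
  · simpa [hinner, hfz] using hf e he

theorem isLeast_inner_image_innerDual (hconv : Convex ℝ K)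
    (hcone : ∀ c : ℝ, 0 ≤ c → ∀ x ∈ K, c • x ∈ K) (he : e ∈ interior K) {c l : ℝ} (hc : 0 ≤ c)
    (hl : IsGreatest {t : ℝ | w - t • e ∈ K} l) :
    IsLeast ((fun s => ⟪w, s⟫) '' {s | s ∈ ProperCone.innerDual K ∧ ⟪e, s⟫ ≤ c})
      (c * min 0 l) := by
  have hmin := isGreatest_min_zero_of_isGreatest hconv hcone (interior_subset he) hl
  refine ⟨?_, ?_⟩
  · rcases le_or_gt 0 l with hl0 | hl0
    · exact ⟨0, ⟨zero_mem _, by simpa using hc⟩, by simp [min_eq_left hl0]⟩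
    · obtain ⟨s, hs, hzs, hes⟩ := exists_mem_innerDual_inner_eq_zero hconv hcone he hl.1
        (sub_smul_notMem_interior_of_isGreatest hl)
      refine ⟨(c / ⟪e, s⟫) • s, ⟨ProperCone.smul_mem _ hs (div_nonneg hc hes.le), ?_⟩, ?_⟩
      · rw [real_inner_smul_right, div_mul_cancel₀ _ hes.ne']
      · have hws : ⟪w, s⟫ = l * ⟪e, s⟫ := by
          rw [inner_sub_left, real_inner_smul_left, sub_eq_zero] at hzs
          exact hzs
        simp only [real_inner_smul_right, hws, min_eq_right hl0.le]
        field_simp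
  · rintro _ ⟨s, ⟨hs, hes⟩, rfl⟩
    exact mul_le_inner_of_mem_innerDual hs hes hmin.1.2 hmin.1.1

end InnerProductSpace

theorem stmt_11_general {m : ℕ} (K : Set (EuclideanSpace ℝ (Fin m)))
    (hclosed : IsClosed K) (hconv : Convex ℝ K)
    (hcone : ∀ (c : ℝ), 0 ≤ c → ∀ x ∈ K, c • x ∈ K)
    (e : EuclideanSpace ℝ (Fin m)) (he : e ∈ interior K)
    (cD : ℝ) (hcD : 0 < cD) (w : EuclideanSpace ℝ (Fin m)) :
    IsGreatest {t : ℝ | t ≤ 0 ∧ w - t • e ∈ K}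
      (min 0 (sSup {t : ℝ | w - t • e ∈ K})) ∧
    IsLeast ((fun s => ⟪w, s⟫) ''
        {s : EuclideanSpace ℝ (Fin m) | (∀ x ∈ K, 0 ≤ ⟪x, s⟫) ∧ ⟪e, s⟫ ≤ cD})
      (cD * min 0 (sSup {t : ℝ | w - t • e ∈ K})) := by
  by_cases hneg : -e ∈ K
  · obtain rfl := eq_univ_of_neg_mem hconv hcone he hneg
    have hdual : ∀ s : EuclideanSpace ℝ (Fin m), (∀ x, 0 ≤ ⟪x, s⟫) ↔ s = 0 := fun s =>
      ⟨fun h => by simpa using h (-s), by rintro rfl; simp⟩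
    -- here `λ_min(w) = +∞`, but `sSup univ = 0` in Lean, which is what the statement reads
    simp only [mem_univ, and_true, ofPred_true, Real.sSup_univ, min_self, mul_zero, forall_const,
      hdual]
    refine ⟨isGreatest_Iic, ⟨0, ⟨rfl, by simpa using hcD.le⟩, inner_zero_right w⟩, ?_⟩
    rintro _ ⟨s, ⟨rfl, -⟩, rfl⟩
    exact (inner_zero_right w).ge
  · have hl := isGreatest_sSup_setOf_sub_smul_mem hclosed hcone he hneg w
    exact ⟨isGreatest_min_zero_of_isGreatest hconv hcone (interior_subset he) hl,
      isLeast_inner_image_innerDual hconv hcone he hcD.le hl⟩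

/-- For a regular closed convex cone `K ⊆ ℝ^m`, `e ∈ int K`,
`c_D > 0` and `w ∈ ℝ^m`: (a) `sup {t ≤ 0 | w - t e ∈ K}` is attained and equals
`t_opt = min(0, λ_min(w))`, where `λ_min(w) = sup {t | w - t e ∈ K}`; (b) the conic
program `min {⟨w,s⟩ : s ∈ K*, ⟨e,s⟩ ≤ c_D}` has an optimal solution and its optimal
value is `c_D · min(0, λ_min(w))`. -/
theorem stmt_11 {m : ℕ} (K : Set (EuclideanSpace ℝ (Fin m)))
    (hclosed : IsClosed K) (hconv : Convex ℝ K)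
    (hcone : ∀ (c : ℝ), 0 ≤ c → ∀ x ∈ K, c • x ∈ K)
    (hpointed : K ∩ (-K) = {0}) (hfull : (interior K).Nonempty)
    (e : EuclideanSpace ℝ (Fin m)) (he : e ∈ interior K)
    (cD : ℝ) (hcD : 0 < cD) (w : EuclideanSpace ℝ (Fin m)) :
    IsGreatest {t : ℝ | t ≤ 0 ∧ w - t • e ∈ K}
      (min 0 (sSup {t : ℝ | w - t • e ∈ K})) ∧
    IsLeast ((fun s => ⟪w, s⟫) ''
        {s : EuclideanSpace ℝ (Fin m) | (∀ x ∈ K, 0 ≤ ⟪x, s⟫) ∧ ⟪e, s⟫ ≤ cD})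
      (cD * min 0 (sSup {t : ℝ | w - t • e ∈ K})) :=
  stmt_11_general K hclosed hconv hcone e he cD hcD w
end

section
/- Let K ⊆ ℝ^m be a regular closed convex cone, e ∈ int K, c_D > 0 and w ∈ ℝ^m, and set t_opt := min(0, λ_min(w)) and z_opt := w − t_opt e. If t_opt = 0, then s = 0 is an optimal solution of the conic program min{⟨w, s⟩ : s ∈ K*, ⟨e, s⟩ ≤ c_D}. If t_opt < 0, then the set of optimal solutions of this program is exactly {s ∈ K* : ⟨e, s⟩ = c_D and ⟨s, z_opt⟩ = 0}. -/
open scoped RealInnerProductSpace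

private lemma support_exists {m : ℕ} {K : Set (EuclideanSpace ℝ (Fin m))}
    (hconv : Convex ℝ K)
    (hcone : ∀ (c : ℝ), 0 ≤ c → ∀ x ∈ K, c • x ∈ K)
    {e : EuclideanSpace ℝ (Fin m)} (he : e ∈ interior K)
    {z : EuclideanSpace ℝ (Fin m)} (hzK : z ∈ K) (hz : z ∉ interior K) :
    ∃ s : EuclideanSpace ℝ (Fin m),
      (∀ x ∈ K, 0 ≤ ⟪x, s⟫) ∧ ⟪z, s⟫ = 0 ∧ 0 < ⟪e, s⟫ := by
  obtain ⟨f, hf⟩ := geometric_hahn_banach_point_open hconv.interior isOpen_interior hz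
  have h0K : (0 : EuclideanSpace ℝ (Fin m)) ∈ K := by
    simpa using hcone 0 le_rfl e (interior_subset he)
  have key : ∀ y ∈ K, f z ≤ f y := by
    intro y hy
    by_contra h
    push_neg at h
    have hM0 : 0 < |f e - f y| + 1 := by positivity
    set t := min 1 ((f z - f y) / (2 * (|f e - f y| + 1))) with ht
    have ht0 : 0 < t := lt_min one_pos (div_pos (by linarith) (by positivity))
    have ht1 : t ≤ 1 := min_le_left _ _
    have htd : t ≤ (f z - f y) / (2 * (|f e - f y| + 1)) := min_le_right _ _
    have hmem := hconv.add_smul_sub_mem_interior hy he ⟨ht0, ht1⟩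
    have h1 : f z < f y + t * (f e - f y) := by
      have := hf _ hmem
      simpa [map_add, map_smul, map_sub, smul_eq_mul] using this
    have h2 : t * (f e - f y) ≤ t * (|f e - f y| + 1) := by
      apply mul_le_mul_of_nonneg_left _ ht0.le
      have := le_abs_self (f e - f y)
      linarith
    have h3 : t * (|f e - f y| + 1) ≤ (f z - f y) / 2 := by
      calc t * (|f e - f y| + 1)
          ≤ (f z - f y) / (2 * (|f e - f y| + 1)) * (|f e - f y| + 1) :=
            mul_le_mul_of_nonneg_right htd hM0.le
        _ = (f z - f y) / 2 := by field_simp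
    linarith
  have hfz_le : f z ≤ 0 := by simpa using key 0 h0K
  have hfK : ∀ y ∈ K, 0 ≤ f y := by
    intro y hy
    by_contra h
    push_neg at h
    set c := (1 - f z) / (-f y) with hc
    have hc0 : 0 ≤ c := by
      apply div_nonneg <;> linarith
    have hkey := key (c • y) (hcone c hc0 y hy)
    have hcy : c * f y = f z - 1 := by
      have hne : f y ≠ 0 := h.ne
      rw [hc, div_mul_eq_mul_div, div_eq_iff (neg_ne_zero.mpr hne)]
      ring
    simp only [map_smul, smul_eq_mul] at hkey
    linarith
  refine ⟨(InnerProductSpace.toDual ℝ _).symm f, ?_, ?_, ?_⟩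
  · intro x hx
    rw [real_inner_comm, InnerProductSpace.toDual_symm_apply]
    exact hfK x hx
  · rw [real_inner_comm, InnerProductSpace.toDual_symm_apply]
    exact le_antisymm hfz_le (hfK z hzK)
  · rw [real_inner_comm, InnerProductSpace.toDual_symm_apply]
    have h1 := hf e he
    have h2 := hfK z hzK
    linarith

/-- With `K ⊆ ℝ^m` a regular closed convex cone, `e ∈ int K`,
`c_D > 0`, `w ∈ ℝ^m`, `t_opt = min(0, λ_min(w))` and `z_opt = w - t_opt e`:
if `t_opt = 0` then `s = 0` is optimal for `min {⟨w,s⟩ : s ∈ K*, ⟨e,s⟩ ≤ c_D}`;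
if `t_opt < 0` then the optimal solution set of this program is exactly
`{s ∈ K* : ⟨e,s⟩ = c_D ∧ ⟨s, z_opt⟩ = 0}`. -/
theorem stmt_12 {m : ℕ} (K : Set (EuclideanSpace ℝ (Fin m)))
    (hclosed : IsClosed K) (hconv : Convex ℝ K)
    (hcone : ∀ (c : ℝ), 0 ≤ c → ∀ x ∈ K, c • x ∈ K)
    (hpointed : K ∩ (-K) = {0}) (hfull : (interior K).Nonempty)
    (e : EuclideanSpace ℝ (Fin m)) (he : e ∈ interior K)
    (cD : ℝ) (hcD : 0 < cD) (w : EuclideanSpace ℝ (Fin m))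
    (topt : ℝ) (htopt : topt = min 0 (sSup {t : ℝ | w - t • e ∈ K}))
    (zopt : EuclideanSpace ℝ (Fin m)) (hzopt : zopt = w - topt • e) :
    (topt = 0 →
      ((∀ x ∈ K, 0 ≤ ⟪x, (0 : EuclideanSpace ℝ (Fin m))⟫) ∧
        ⟪e, (0 : EuclideanSpace ℝ (Fin m))⟫ ≤ cD) ∧
      ∀ s : EuclideanSpace ℝ (Fin m), (∀ x ∈ K, 0 ≤ ⟪x, s⟫) → ⟪e, s⟫ ≤ cD →
        ⟪w, (0 : EuclideanSpace ℝ (Fin m))⟫ ≤ ⟪w, s⟫) ∧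
    (topt < 0 →
      {s : EuclideanSpace ℝ (Fin m) |
          ((∀ x ∈ K, 0 ≤ ⟪x, s⟫) ∧ ⟪e, s⟫ ≤ cD) ∧
          ∀ s' : EuclideanSpace ℝ (Fin m),
            (∀ x ∈ K, 0 ≤ ⟪x, s'⟫) → ⟪e, s'⟫ ≤ cD → ⟪w, s⟫ ≤ ⟪w, s'⟫}
        = {s : EuclideanSpace ℝ (Fin m) |
            (∀ x ∈ K, 0 ≤ ⟪x, s⟫) ∧ ⟪e, s⟫ = cD ∧ ⟪s, zopt⟫ = 0}) := by
  classical
  have heK : e ∈ K := interior_subset he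
  have h0K : (0 : EuclideanSpace ℝ (Fin m)) ∈ K := by
    simpa using hcone 0 le_rfl e heK
  by_cases hKuniv : K = Set.univ
  · -- degenerate case: K is everything, so by pointedness the space is trivial
    have hall : ∀ x : EuclideanSpace ℝ (Fin m), x = 0 := by
      intro x
      have hx : x ∈ K ∩ (-K) := by
        constructor
        · rw [hKuniv]; trivial
        · rw [Set.mem_neg, hKuniv]; trivial
      rw [hpointed] at hx
      simpa using hx
    constructor
    · intro _
      refine ⟨⟨fun x _ => by simp, by rw [inner_zero_right]; exact hcD.le⟩,
        fun s _ _ => ?_⟩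
      rw [hall w]
      simp
    · intro hlt
      exfalso
      have hset : {t : ℝ | w - t • e ∈ K} = Set.univ := by
        ext t; simp [hKuniv]
      rw [hset, Real.sSup_univ] at htopt
      simp at htopt
      linarith
  · -- main case
    have he0 : e ≠ 0 := by
      intro h
      apply hKuniv
      rw [h] at he
      obtain ⟨ε, hε, hball⟩ := Metric.isOpen_iff.1 isOpen_interior 0 he
      ext x
      simp only [Set.mem_univ, iff_true]
      rcases eq_or_ne x 0 with rfl | hx
      · exact h0K
      · have hx0 : 0 < ‖x‖ := norm_pos_iff.2 hx
        have hmem : (ε / (2 * ‖x‖)) • x ∈ K := by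
          apply interior_subset
          apply hball
          rw [Metric.mem_ball, dist_zero_right, norm_smul, Real.norm_eq_abs,
            abs_of_pos (by positivity)]
          rw [div_mul_eq_mul_div, mul_comm]
          rw [div_lt_iff₀ (by positivity)]
          nlinarith
        have hres := hcone ((2 * ‖x‖) / ε) (by positivity) _ hmem
        rw [smul_smul] at hres
        have hone : (2 * ‖x‖) / ε * (ε / (2 * ‖x‖)) = 1 := by
          field_simp
        rwa [hone, one_smul] at hres
    have hadd : ∀ x ∈ K, ∀ y ∈ K, x + y ∈ K := by
      intro x hx y hy
      have hmid := hconv hx hy (by norm_num : (0:ℝ) ≤ 1/2)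
        (by norm_num : (0:ℝ) ≤ 1/2) (by norm_num)
      have h2 := hcone 2 (by norm_num) _ hmid
      have heq : (2:ℝ) • ((1/2 : ℝ) • x + (1/2 : ℝ) • y) = x + y := by
        rw [smul_add, smul_smul, smul_smul]
        norm_num
      rwa [heq] at h2
    set S := {t : ℝ | w - t • e ∈ K} with hSdef
    have hS_closed : IsClosed S := by
      have hcont : Continuous fun t : ℝ => w - t • e :=
        continuous_const.sub (continuous_id.smul continuous_const)
      exact hclosed.preimage hcont
    have hS_ne : S.Nonempty := by
      obtain ⟨ε, hε, hball⟩ := Metric.isOpen_iff.1 isOpen_interior e he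
      set r := ‖w‖ / ε + 1 with hr
      have hr0 : 0 < r := by positivity
      refine ⟨-r, ?_⟩
      have hb : e + r⁻¹ • w ∈ Metric.ball e ε := by
        rw [Metric.mem_ball, dist_eq_norm, add_sub_cancel_left, norm_smul,
          norm_inv, Real.norm_eq_abs, abs_of_pos hr0]
        rw [inv_mul_eq_div, div_lt_iff₀ hr0, hr, mul_add, mul_one,
          mul_div_cancel₀ _ hε.ne']
        linarith
      have hmem : r • (e + r⁻¹ • w) ∈ K :=
        hcone r hr0.le _ (interior_subset (hball hb))
      have heq : r • (e + r⁻¹ • w) = w - (-r) • e := by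
        rw [smul_add, smul_smul, mul_inv_cancel₀ hr0.ne', one_smul,
          neg_smul, sub_neg_eq_add]
        abel
      show w - (-r) • e ∈ K
      rwa [heq] at hmem
    have hS_bdd : BddAbove S := by
      by_contra hB
      rw [not_bddAbove_iff] at hB
      have hseq : ∀ n : ℕ, ∃ t, t ∈ S ∧ (n : ℝ) + 1 < t := by
        intro n
        obtain ⟨t, ht, htn⟩ := hB ((n : ℝ) + 1)
        exact ⟨t, ht, htn⟩
      choose t htS htn using hseq
      have ht0 : ∀ n, 0 < t n := fun n => by
        have h1 := htn n
        have h2 : (0:ℝ) ≤ (n:ℝ) := Nat.cast_nonneg n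
        linarith
      have hxK : ∀ n, (t n)⁻¹ • w - e ∈ K := by
        intro n
        have := hcone (t n)⁻¹ (inv_nonneg.2 (ht0 n).le) _ (htS n)
        have heq : (t n)⁻¹ • (w - t n • e) = (t n)⁻¹ • w - e := by
          rw [smul_sub, smul_smul, inv_mul_cancel₀ (ht0 n).ne', one_smul]
        rwa [heq] at this
      have htop : Filter.Tendsto t Filter.atTop Filter.atTop := by
        apply Filter.tendsto_atTop_mono (fun n => (htn n).le)
        apply Filter.tendsto_atTop_add_const_right
        exact tendsto_natCast_atTop_atTop
      have hinv : Filter.Tendsto (fun n => (t n)⁻¹) Filter.atTop (nhds 0) :=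
        tendsto_inv_atTop_zero.comp htop
      have hlim : Filter.Tendsto (fun n => (t n)⁻¹ • w - e) Filter.atTop
          (nhds (-e)) := by
        have h1 : Filter.Tendsto (fun n => (t n)⁻¹ • w) Filter.atTop
            (nhds ((0 : ℝ) • w)) := hinv.smul_const w
        rw [zero_smul] at h1
        simpa using h1.sub_const e
      have hneg : -e ∈ K := hclosed.mem_of_tendsto hlim
        (Filter.Eventually.of_forall hxK)
      have : e ∈ K ∩ (-K) := ⟨heK, by rwa [Set.mem_neg]⟩
      rw [hpointed] at this
      exact he0 (by simpa using this)
    set lam := sSup S with hlam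
    have hlam_mem : w - lam • e ∈ K := hS_closed.csSup_mem hS_ne hS_bdd
    have hlam_max : ∀ t : ℝ, w - t • e ∈ K → t ≤ lam := fun t ht =>
      le_csSup hS_bdd ht
    constructor
    · -- topt = 0
      intro h0
      have hmin : min 0 lam = 0 := htopt.symm.trans h0
      have hlam0 : 0 ≤ lam := min_eq_left_iff.mp hmin
      have hwK : w ∈ K := by
        have := hadd _ hlam_mem _ (hcone lam hlam0 e heK)
        simpa using this
      refine ⟨⟨fun x _ => by simp, by rw [inner_zero_right]; exact hcD.le⟩,
        fun s hs _ => ?_⟩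
      rw [inner_zero_right]
      exact hs w hwK
    · -- topt < 0
      intro hlt
      have hmin : min 0 lam < 0 := htopt ▸ hlt
      have hlam_neg : lam < 0 := (min_lt_iff.mp hmin).resolve_left (lt_irrefl 0)
      have htopt_lam : topt = lam := by
        rw [htopt]; exact min_eq_right hlam_neg.le
      have hz_eq : zopt = w - lam • e := by rw [hzopt, htopt_lam]
      have hzK : zopt ∈ K := by rw [hz_eq]; exact hlam_mem
      have hz_not_int : zopt ∉ interior K := by
        intro hzi
        obtain ⟨ε, hε, hball⟩ := Metric.isOpen_iff.1 isOpen_interior _ hzi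
        have hen : 0 < ‖e‖ := norm_pos_iff.2 he0
        set δ := ε / (2 * ‖e‖) with hδdef
        have hδ : 0 < δ := by positivity
        have hmemb : zopt - δ • e ∈ K := by
          apply interior_subset
          apply hball
          rw [Metric.mem_ball, dist_eq_norm]
          have heq : zopt - δ • e - zopt = -(δ • e) := by abel
          rw [heq, norm_neg, norm_smul, Real.norm_eq_abs, abs_of_pos hδ,
            hδdef, div_mul_eq_mul_div, div_lt_iff₀ (by positivity)]
          nlinarith [mul_pos hε hen]
        have hmem2 : w - (lam + δ) • e ∈ K := by
          have heq : w - (lam + δ) • e = zopt - δ • e := by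
            rw [hz_eq, add_smul]; abel
          rwa [heq]
        have := hlam_max _ hmem2
        linarith
      obtain ⟨s0, hs0K, hs0z, hs0e⟩ := support_exists hconv hcone he hzK hz_not_int
      set sstar := (cD / ⟪e, s0⟫) • s0 with hsstar
      have hcq : 0 < cD / ⟪e, s0⟫ := by positivity
      have hsstarK : ∀ x ∈ K, 0 ≤ ⟪x, sstar⟫ := by
        intro x hx
        rw [hsstar, real_inner_smul_right]
        exact mul_nonneg hcq.le (hs0K x hx)
      have hsstare : ⟪e, sstar⟫ = cD := by
        rw [hsstar, real_inner_smul_right, div_mul_cancel₀ _ hs0e.ne']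
      have hsstarz : ⟪zopt, sstar⟫ = 0 := by
        rw [hsstar, real_inner_smul_right, hs0z, mul_zero]
      have hobj : ∀ s : EuclideanSpace ℝ (Fin m),
          ⟪w, s⟫ = ⟪zopt, s⟫ + lam * ⟪e, s⟫ := by
        intro s
        have hw : w = zopt + lam • e := by rw [hz_eq]; abel
        rw [hw, inner_add_left, real_inner_smul_left]
      have hlower : ∀ s : EuclideanSpace ℝ (Fin m),
          (∀ x ∈ K, 0 ≤ ⟪x, s⟫) → ⟪e, s⟫ ≤ cD → lam * cD ≤ ⟪w, s⟫ := by
        intro s hsK hse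
        rw [hobj]
        have h1 : 0 ≤ ⟪zopt, s⟫ := hsK zopt hzK
        nlinarith [mul_nonneg (neg_nonneg.2 hlam_neg.le) (sub_nonneg.2 hse)]
      have hwstar : ⟪w, sstar⟫ = lam * cD := by
        rw [hobj, hsstarz, hsstare]; ring
      ext s
      simp only [Set.mem_setOf_eq]
      constructor
      · rintro ⟨⟨hsK, hse⟩, hopt⟩
        have h1 := hopt sstar hsstarK (le_of_eq hsstare)
        rw [hwstar] at h1
        have h2 : 0 ≤ ⟪zopt, s⟫ := hsK zopt hzK
        have h3 : lam * cD ≤ lam * ⟪e, s⟫ := by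
          nlinarith [mul_nonneg (neg_nonneg.2 hlam_neg.le) (sub_nonneg.2 hse)]
        have h4 := hobj s
        have hz0 : ⟪zopt, s⟫ = 0 := by linarith
        have hecd : ⟪e, s⟫ = cD := by
          have heq' : lam * ⟪e, s⟫ = lam * cD := by linarith
          exact mul_left_cancel₀ hlam_neg.ne heq'
        exact ⟨hsK, hecd, by rw [real_inner_comm]; exact hz0⟩
      · rintro ⟨hsK, hse, hsz⟩
        have hz0 : ⟪zopt, s⟫ = 0 := by rw [real_inner_comm]; exact hsz
        refine ⟨⟨hsK, le_of_eq hse⟩, fun s' hs'K hs'e => ?_⟩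
        have hlow := hlower s' hs'K hs'e
        rw [hobj s, hz0, hse]
        linarith
end
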